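/- For any two strings S1 and S2 of equal length, the Cartesian trees CT(S1) and CT(S2) are equal if and only if PD(S1) = PD(S2). -/

import Mathlib

open List

inductive Shape where
  | nil : Shape
  | node : Shape → Shape → Shape
deriving DecidableEq

inductive BTree (α : Type*) where
  | nil : BTree α
  | node : BTree α → α → BTree α → BTree α

def BTree.shape {α : Type*} : BTree α → Shape
  | .nil => .nil
  | .node l _ r => .node l.shape r.shape

def BTree.rootVal {α : Type*} : BTree α → Option α
  | .nil => none
  | .node _ v _ => some v

section
variable {α : Type*} [LinearOrder α] [Inhabited α]

/-- Parent-distance value at 1-based position `i` of `S`. -/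
def pdVal (S : List α) (i : ℕ) : ℕ :=
  let J := (Finset.Ico 1 i).filter (fun j => S.getD (j-1) default ≤ S.getD (i-1) default)
  if h : J.Nonempty then i - J.max' h else 0

/-- Parent-distance encoding of `S` (1-based positions). -/
def PD (S : List α) : List ℕ := (List.range S.length).map (fun k => pdVal S (k+1))

/-- 0-based index of the leftmost minimum of `S`. -/
def leftmostMinIdx (S : List α) : ℕ :=
  ((List.range S.length).argmin (fun j => S.getD j default)).getD 0

def CTaux : ℕ → List α → BTree α
  | 0, _ => .nil
  | (n+1), S =>
    if S.isEmpty then .nil else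
      let i := leftmostMinIdx S
      .node (CTaux n (S.take i)) (S.getD i default) (CTaux n (S.drop (i+1)))

/-- The (labeled) Cartesian tree of `S`. -/
def CT (S : List α) : BTree α := CTaux S.length S

/-- Front pointers of a sequence `u` of naturals (1-based positions `k ≥ 2` with `k - u[k] = 1`). -/
def frontPointers (u : List ℕ) : Finset ℕ :=
  (Finset.Icc 2 u.length).filter (fun k => k - u.getD (k-1) 0 = 1)

/-- `FP(S)[i]`: number of front pointers of `PD(S[i..])` (1-based `i`). -/
def FPval (S : List α) (i : ℕ) : ℕ := (frontPointers (PD (S.drop (i-1)))).card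

/-- The FP encoding of `S`. -/
def FP (S : List α) : List ℕ := (List.range S.length).map (fun k => FPval S (k+1))

end

/-! Splitting `S` at its leftmost minimum `c` as `L ++ c :: R`, the parent distances of `L` are
those of `L` alone, `c` gets `0`, and in `R` they are those of `R` except that every position with
no predecessor `≤` it inside `R` now points to `c`. This is the recursion that defines `CT`, so
`PD S` is a function `Shape.pd` of the shape of `CT S`. Conversely `Shape.pd` is injective: the root
is the last `0` of the code, and the redirection of `R`'s zeros to `c` can be undone because a
parent distance at (0-based) position `j` never exceeds `j`. -/

lemma idxOf_range {n j : ℕ} (hj : j < n) : (range n).idxOf j = j := by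
  have h := getElem_idxOf (idxOf_lt_length_of_mem (mem_range.2 hj))
  rwa [getElem_range] at h

lemma append_cons_inj_of_notMem {α : Type*} {A B A' B' : List α} {a : α} (hB : a ∉ B)
    (hB' : a ∉ B') (h : A ++ a :: B = A' ++ a :: B') : A = A' ∧ B = B' := by
  induction A generalizing A' with
  | nil => cases A' <;> simp_all
  | cons x A ih =>
    cases A' with
    | nil =>
      obtain ⟨rfl, rfl⟩ := cons.inj h
      simp at hB'
    | cons y A' => simp only [cons_append, cons.injEq] at h; simpa [h.1] using ih h.2

def fillZeros (u : List ℕ) : List ℕ := u.mapIdx fun j v => if v = 0 then j + 1 else v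

lemma pos_of_mem_fillZeros {u : List ℕ} {v : ℕ} (hv : v ∈ fillZeros u) : 0 < v := by
  obtain ⟨j, v', -, rfl⟩ := mem_mapIdx.1 hv
  split_ifs <;> omega

lemma eq_of_fillZeros_eq {u u' : List ℕ} (hu : ∀ j (hj : j < u.length), u[j] ≤ j)
    (hu' : ∀ j (hj : j < u'.length), u'[j] ≤ j) (h : fillZeros u = fillZeros u') : u = u' := by
  have hlen : u.length = u'.length := by simpa [fillZeros] using congrArg length h
  refine ext_getElem hlen fun j hj hj' => ?_
  have hle := hu j hj
  have hle' := hu' j hj'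
  have hfill := congrArg (·[j]?) h
  simp only [fillZeros, getElem?_mapIdx, getElem?_eq_getElem hj, getElem?_eq_getElem hj',
    Option.map_some, Option.some_inj] at hfill
  split_ifs at hfill <;> omega

section PrevDist
variable {α : Type*} [LinearOrder α]

def prevDist (P : List α) (x : α) : ℕ :=
  ((P.reverse.findIdx? (· ≤ x)).map (· + 1)).getD 0

lemma prevDist_eq_zero {P : List α} {x : α} (h : ∀ a ∈ P, x < a) : prevDist P x = 0 := by
  have : P.reverse.findIdx? (· ≤ x) = none := by simpa using h
  simp [prevDist, this]

lemma prevDist_append_cons {L R : List α} {c x : α} (hcx : c ≤ x) :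
    prevDist (L ++ c :: R) x = if prevDist R x = 0 then R.length + 1 else prevDist R x := by
  cases h : R.reverse.findIdx? (· ≤ x) <;> simp [prevDist, h, findIdx?_cons, hcx]

end PrevDist

section PD
variable {α : Type*} [LinearOrder α] [Inhabited α]

@[simp] lemma length_PD (S : List α) : (PD S).length = S.length := by simp [PD]

@[simp] lemma PD_nil : PD ([] : List α) = [] := rfl

lemma mem_pdVal_filter_iff {S : List α} {k : ℕ} (hk : k < S.length) (j : ℕ) :
    j ∈ (Finset.Ico 1 (k + 1)).filter (fun j => S.getD (j - 1) default ≤ S.getD k default) ↔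
      ∃ h : j - 1 < k, 1 ≤ j ∧ S[j - 1] ≤ S[k] := by
  simp only [Finset.mem_filter, Finset.mem_Ico]
  constructor
  · rintro ⟨⟨h1, h2⟩, h3⟩
    exact ⟨by omega, h1, by rwa [getD_eq_getElem _ _ (by omega), getD_eq_getElem _ _ hk] at h3⟩
  · rintro ⟨h, h1, h3⟩
    exact ⟨⟨h1, by omega⟩, by rwa [getD_eq_getElem _ _ (by omega), getD_eq_getElem _ _ hk]⟩

lemma pdVal_succ_eq_zero {S : List α} {k : ℕ} (hk : k < S.length)
    (h : ∀ j (hj : j < k), S[k] < S[j]) : pdVal S (k + 1) = 0 := by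
  simp only [pdVal, Nat.add_sub_cancel]
  rw [dif_neg]
  rintro ⟨j, hj⟩
  obtain ⟨hj, -, hle⟩ := (mem_pdVal_filter_iff hk j).1 hj
  exact (h _ hj).not_ge hle

lemma pdVal_succ_eq_sub {S : List α} {k j : ℕ} (hk : k < S.length) (hjk : j < k)
    (hle : S[j] ≤ S[k]) (hlt : ∀ i (hi : i < k), j < i → S[k] < S[i]) :
    pdVal S (k + 1) = k - j := by
  set J := (Finset.Ico 1 (k + 1)).filter (fun j => S.getD (j - 1) default ≤ S.getD k default)
  have hmem : j + 1 ∈ J := (mem_pdVal_filter_iff hk _).2 ⟨hjk, by omega, hle⟩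
  have hmax : ∀ i ∈ J, i ≤ j + 1 := by
    intro i hi
    obtain ⟨hi, -, hile⟩ := (mem_pdVal_filter_iff hk i).1 hi
    by_contra! hji
    exact (hlt _ hi (by omega)).not_ge hile
  simp only [pdVal, Nat.add_sub_cancel]
  rw [dif_pos ⟨_, hmem⟩, le_antisymm (J.max'_le _ _ hmax) (J.le_max' _ hmem)]
  omega

lemma getElem_PD (S : List α) (k : ℕ) (hk : k < (PD S).length) :
    (PD S)[k] = prevDist (S.take k) (S[k]'(by simpa using hk)) := by
  have hkS : k < S.length := by simpa using hk
  simp only [PD, getElem_map, getElem_range]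
  cases hfind : (S.take k).reverse.findIdx? (· ≤ S[k]) with
  | none =>
    rw [prevDist, hfind, pdVal_succ_eq_zero hkS fun j hj => ?_, Option.map_none, Option.getD_none]
    have hmem : S[j] ∈ (S.take k).reverse :=
      mem_reverse.2 (mem_iff_getElem.2 ⟨j, by simp; omega, by simp⟩)
    simpa using findIdx?_eq_none_iff.1 hfind _ hmem
  | some d =>
    obtain ⟨hd, hle, hmin⟩ := findIdx?_eq_some_iff_getElem.1 hfind
    simp only [length_reverse, length_take, hkS.le, inf_of_le_left, getElem_reverse, getElem_take,
      decide_eq_true_eq] at hd hle hmin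
    rw [prevDist, hfind, pdVal_succ_eq_sub hkS (by omega) hle fun i hi hdi => ?_]
    · simp only [Option.map_some, Option.getD_some]
      omega
    · simpa [show k - 1 - (k - 1 - i) = i by omega] using hmin (k - 1 - i) (by omega)

lemma PD_concat (S : List α) (x : α) : PD (S ++ [x]) = PD S ++ [prevDist S x] := by
  apply ext_getElem (by simp)
  intro k hk _
  rw [getElem_PD]
  rcases lt_or_eq_of_le (Nat.le_of_lt_succ (by simpa using hk)) with hk | rfl
  · simp [getElem_append_left, hk, getElem_PD, take_append_of_le_length hk.le]
  · simp

lemma PD_append_cons {L R : List α} {c : α} (hL : ∀ a ∈ L, c < a)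
    (hR : ∀ a ∈ R, c ≤ a) : PD (L ++ c :: R) = PD L ++ 0 :: fillZeros (PD R) := by
  induction R using reverseRecOn with
  | nil => simp [fillZeros, PD_concat, prevDist_eq_zero hL]
  | append_singleton R x ih =>
    have hcx : c ≤ x := hR x (by simp)
    rw [← cons_append, ← append_assoc, PD_concat, ih fun a ha => hR a (by simp [ha]), PD_concat,
      prevDist_append_cons hcx]
    simp [fillZeros]

end PD

section CT
variable {α : Type*} [LinearOrder α] [Inhabited α]

lemma leftmostMinIdx_spec {S : List α} (hS : S ≠ []) :
    ∃ h : leftmostMinIdx S < S.length,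
      (∀ j (hj : j < S.length), S[leftmostMinIdx S] ≤ S[j]) ∧
      ∀ j (hj : j < leftmostMinIdx S), S[leftmostMinIdx S] < S[j] := by
  obtain ⟨m, hm⟩ := Option.ne_none_iff_exists'.1
    (mt argmin_eq_none.1 (by simpa using hS) :
      (range S.length).argmin (fun j => S.getD j default) ≠ none)
  have hi : leftmostMinIdx S = m := by rw [leftmostMinIdx, hm]; rfl
  obtain ⟨hmS, hmin, hfirst⟩ := argmin_eq_some_iff.1 hm
  rw [mem_range] at hmS
  subst hi
  refine ⟨hmS, fun j hj => ?_, fun j hj => ?_⟩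
  · simpa [getD_eq_getElem, hj, hmS] using hmin j (mem_range.2 hj)
  · by_contra! hle
    have := hfirst j (mem_range.2 (by omega)) (by simpa [getD_eq_getElem, hmS, hj.trans hmS])
    rw [idxOf_range hmS, idxOf_range (by omega)] at this
    omega

lemma length_take_leftmostMinIdx_lt {S : List α} (hS : S ≠ []) :
    (S.take (leftmostMinIdx S)).length < S.length := by
  obtain ⟨hi, -⟩ := leftmostMinIdx_spec hS
  simpa using hi

lemma length_drop_leftmostMinIdx_lt {S : List α} (hS : S ≠ []) :
    (S.drop (leftmostMinIdx S + 1)).length < S.length := by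
  simpa using length_pos_iff.2 hS

lemma CTaux_eq_CTaux {n m : ℕ} {S : List α} (hn : S.length ≤ n) (hm : S.length ≤ m) :
    CTaux n S = CTaux m S := by
  induction n generalizing m S with
  | zero => cases m <;> simp_all [CTaux]
  | succ n ih =>
    rcases eq_or_ne S [] with rfl | hS
    · cases m <;> rfl
    have h0 := length_pos_iff.2 hS
    obtain ⟨m, rfl⟩ : ∃ m', m = m' + 1 := Nat.exists_eq_succ_of_ne_zero (by omega)
    have h1 := length_take_leftmostMinIdx_lt hS
    have h2 := length_drop_leftmostMinIdx_lt hS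
    simp only [CTaux]
    rw [ih (m := m) (by omega) (by omega), ih (m := m) (by omega) (by omega)]

lemma CT_of_ne_nil {S : List α} (hS : S ≠ []) :
    CT S = .node (CT (S.take (leftmostMinIdx S))) (S.getD (leftmostMinIdx S) default)
      (CT (S.drop (leftmostMinIdx S + 1))) := by
  obtain ⟨n, hn⟩ := Nat.exists_eq_succ_of_ne_zero (mt length_eq_zero_iff.1 hS)
  have h1 := length_take_leftmostMinIdx_lt hS
  have h2 := length_drop_leftmostMinIdx_lt hS
  rw [CT, hn, CTaux, if_neg (by simpa using hS)]
  dsimp only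
  congr 1 <;> rw [CT] <;> apply CTaux_eq_CTaux <;> omega

end CT

def Shape.pd : Shape → List ℕ
  | .nil => []
  | .node l r => l.pd ++ 0 :: fillZeros r.pd

lemma PD_eq_pd_shape_CT {α : Type*} [LinearOrder α] [Inhabited α] (S : List α) :
    PD S = (CT S).shape.pd := by
  induction h : S.length using Nat.strong_induction_on generalizing S with
  | _ n ih =>
    rcases eq_or_ne S [] with rfl | hS
    · rfl
    obtain ⟨hi, hmin, hfirst⟩ := leftmostMinIdx_spec hS
    set i := leftmostMinIdx S
    have hsplit : S = S.take i ++ S[i] :: S.drop (i + 1) := by simp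
    rw [CT_of_ne_nil hS, BTree.shape, Shape.pd,
      ← ih _ (h ▸ length_take_leftmostMinIdx_lt hS) _ rfl,
      ← ih _ (h ▸ length_drop_leftmostMinIdx_lt hS) _ rfl]
    conv_lhs => rw [hsplit]
    refine PD_append_cons (fun a ha => ?_) (fun a ha => ?_)
    · obtain ⟨j, hj, rfl⟩ := getElem_of_mem ha
      simpa using hfirst j (by simp at hj; omega)
    · obtain ⟨j, hj, rfl⟩ := getElem_of_mem ha
      simpa using hmin (i + 1 + j) (by simp at hj; omega)

lemma Shape.getElem_pd_le (sh : Shape) (j : ℕ) (hj : j < sh.pd.length) : sh.pd[j] ≤ j := by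
  induction sh generalizing j with
  | nil => simp [Shape.pd] at hj
  | node l r ihl ihr =>
    simp only [Shape.pd, getElem_append, getElem_cons, fillZeros, getElem_mapIdx]
    split_ifs
    all_goals first | omega | exact ihl _ _ | exact (ihr _ _).trans (by omega)

lemma Shape.pd_injective : Function.Injective Shape.pd := by
  intro sh₁
  induction sh₁ with
  | nil => intro sh₂ h; cases sh₂ <;> simp_all [Shape.pd]
  | node l r ihl ihr =>
    intro sh₂ h
    cases sh₂ with
    | nil => simp [Shape.pd] at h
    | node l' r' =>
      have notMem : ∀ u, 0 ∉ fillZeros u := fun u h => (pos_of_mem_fillZeros h).false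
      obtain ⟨hl, hr⟩ := append_cons_inj_of_notMem (notMem _) (notMem _) h
      rw [ihl hl, ihr (eq_of_fillZeros_eq (Shape.getElem_pd_le r) (Shape.getElem_pd_le r') hr)]

theorem stmt2_general {α β : Type*} [LinearOrder α] [Inhabited α] [LinearOrder β] [Inhabited β]
    (S₁ : List α) (S₂ : List β) :
    (CT S₁).shape = (CT S₂).shape ↔ PD S₁ = PD S₂ := by
  rw [PD_eq_pd_shape_CT, PD_eq_pd_shape_CT]
  exact Shape.pd_injective.eq_iff.symm

/-- Two equal-length strings have equal Cartesian trees iff their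
parent-distance encodings coincide. -/
theorem stmt2 {α β : Type*} [LinearOrder α] [Inhabited α] [LinearOrder β] [Inhabited β]
    (S₁ : List α) (S₂ : List β) (hlen : S₁.length = S₂.length) :
    (CT S₁).shape = (CT S₂).shape ↔ PD S₁ = PD S₂ :=
  stmt2_general S₁ S₂
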